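/- In Ω = Aut(T), two first-level-inactive elements (u,v) and (u',v') are conjugate in Ω if and only if either (u is conjugate to u' and v is conjugate to v') or (u is conjugate to v' and v is conjugate to u'). -/

import Mathlib

open Equiv

/-- Vertices of the infinite rooted binary tree: finite words over `Bool`.
The parent of a nonempty word is `dropLast`. -/
abbrev Wd := List Bool

/-- The group `Ω = Aut(T)` of automorphisms of the infinite rooted binary tree,
realized as the subgroup of permutations of the vertex set preserving length
(levels) and the parent relation. -/
def OmegaSG : Subgroup (Equiv.Perm Wd) where
  carrier := {σ | (∀ w, (σ w).length = w.length) ∧ ∀ w, (σ w).dropLast = σ w.dropLast}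
  one_mem' := ⟨fun _ => rfl, fun _ => rfl⟩
  mul_mem' := by
    rintro σ τ ⟨hσl, hσd⟩ ⟨hτl, hτd⟩
    refine ⟨fun w => ?_, fun w => ?_⟩
    · simp [Equiv.Perm.mul_apply, hσl, hτl]
    · simp [Equiv.Perm.mul_apply, hσd, hτd]
  inv_mem' := by
    rintro σ ⟨hl, hd⟩
    refine ⟨fun w => ?_, fun w => ?_⟩
    · have := hl (σ⁻¹ w)
      rw [show σ (σ⁻¹ w) = w from σ.apply_symm_apply w] at this
      exact this.symm
    · apply σ.injective
      have := hd (σ⁻¹ w)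
      rw [show σ (σ⁻¹ w) = w from σ.apply_symm_apply w] at this
      rw [← this]
      simp

/-- The section pairing: `(u,v)` acts as `u` on the subtree rooted at `false`
and as `v` on the subtree rooted at `true`. -/
def pairFun (f g : Wd → Wd) : Wd → Wd
  | [] => []
  | false :: w => false :: f w
  | true :: w => true :: g w

@[simp] lemma pairFun_nil (f g : Wd → Wd) : pairFun f g [] = [] := rfl
@[simp] lemma pairFun_false (f g : Wd → Wd) (w : Wd) :
    pairFun f g (false :: w) = false :: f w := rfl
@[simp] lemma pairFun_true (f g : Wd → Wd) (w : Wd) :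
    pairFun f g (true :: w) = true :: g w := rfl

lemma pairFun_comp (f g f' g' : Wd → Wd) (hf : ∀ w, f (f' w) = w) (hg : ∀ w, g (g' w) = w) :
    ∀ w, pairFun f g (pairFun f' g' w) = w := by
  rintro (_ | ⟨(_|_), w⟩) <;> simp [hf, hg]

/-- The permutation `(u,v)` of the tree. -/
def pairPerm (u v : Equiv.Perm Wd) : Equiv.Perm Wd where
  toFun := pairFun u v
  invFun := pairFun u.symm v.symm
  left_inv := pairFun_comp _ _ _ _ (fun w => u.symm_apply_apply w) (fun w => v.symm_apply_apply w)
  right_inv := pairFun_comp _ _ _ _ (fun w => u.apply_symm_apply w) (fun w => v.apply_symm_apply w)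

@[simp] lemma pairPerm_apply (u v : Equiv.Perm Wd) (w : Wd) :
    pairPerm u v w = pairFun u v w := rfl

/-- The first-level swap `σ`. -/
def swapPerm : Equiv.Perm Wd where
  toFun w := match w with | [] => [] | b :: w => (!b) :: w
  invFun w := match w with | [] => [] | b :: w => (!b) :: w
  left_inv := by rintro (_ | ⟨b, w⟩) <;> simp
  right_inv := by rintro (_ | ⟨b, w⟩) <;> simp

@[simp] lemma swapPerm_nil : swapPerm [] = [] := rfl
@[simp] lemma swapPerm_cons (b : Bool) (w : Wd) : swapPerm (b :: w) = (!b) :: w := rfl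

lemma swapPerm_mem : swapPerm ∈ OmegaSG := by
  constructor
  · rintro (_ | ⟨b, w⟩) <;> simp
  · rintro (_ | ⟨b, w⟩)
    · simp
    · rcases eq_or_ne w [] with rfl | hw
      · simp
      · simp only [swapPerm_cons, List.dropLast_cons_of_ne_nil hw]

lemma mem_omega_length {u : Equiv.Perm Wd} (hu : u ∈ OmegaSG) (w : Wd) :
    (u w).length = w.length := hu.1 w

lemma mem_omega_ne_nil {u : Equiv.Perm Wd} (hu : u ∈ OmegaSG) {w : Wd} (hw : w ≠ []) :
    u w ≠ [] := by
  intro h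
  exact hw (List.eq_nil_of_length_eq_zero (by rw [← hu.1 w, h]; rfl))

lemma mem_omega_nil {u : Equiv.Perm Wd} (hu : u ∈ OmegaSG) : u [] = [] :=
  List.eq_nil_of_length_eq_zero (hu.1 [])

lemma pairPerm_mem {u v : Equiv.Perm Wd} (hu : u ∈ OmegaSG) (hv : v ∈ OmegaSG) :
    pairPerm u v ∈ OmegaSG := by
  constructor
  · rintro (_ | ⟨(_|_), w⟩) <;> simp [hu.1, hv.1]
  · rintro (_ | ⟨(_|_), w⟩)
    · simp
    · rcases eq_or_ne w [] with rfl | hw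
      · simp [mem_omega_nil hu]
      · simp only [pairPerm_apply, pairFun_false, List.dropLast_cons_of_ne_nil hw,
          List.dropLast_cons_of_ne_nil (mem_omega_ne_nil hu hw)]
        rw [hu.2]
    · rcases eq_or_ne w [] with rfl | hw
      · simp [mem_omega_nil hv]
      · simp only [pairPerm_apply, pairFun_true, List.dropLast_cons_of_ne_nil hw,
          List.dropLast_cons_of_ne_nil (mem_omega_ne_nil hv hw)]
        rw [hv.2]

/-- `(u,v)` as an element of `Ω`. -/
def pairOm (u v : OmegaSG) : OmegaSG := ⟨pairPerm u.1 v.1, pairPerm_mem u.2 v.2⟩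

/-- `σ` as an element of `Ω`. -/
def swapOm : OmegaSG := ⟨swapPerm, swapPerm_mem⟩

/-! ### Levels, restriction, sign, odometers -/

/-- Level `n` of the tree: words of length `n`. -/
abbrev Lv (n : ℕ) := {w : Wd // w.length = n}

instance fintypeLv (n : ℕ) : Fintype (Lv n) := by
  apply Fintype.ofSurjective (fun g : Fin n → Bool => (⟨List.ofFn g, List.length_ofFn⟩ : Lv n))
  rintro ⟨w, rfl⟩
  exact ⟨w.get, Subtype.ext (List.ofFn_get w)⟩

/-- The permutation induced by `g ∈ Ω` on level `n`. -/
def levelPerm (n : ℕ) (g : OmegaSG) : Equiv.Perm (Lv n) where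
  toFun w := ⟨g.1 w.1, by rw [mem_omega_length g.2, w.2]⟩
  invFun w := ⟨(g⁻¹ : OmegaSG).1 w.1, by rw [mem_omega_length (g⁻¹ : OmegaSG).2, w.2]⟩
  left_inv w := Subtype.ext (by simp)
  right_inv w := Subtype.ext (by simp)

/-- Restriction to level `n` as a group homomorphism. -/
def levelHom (n : ℕ) : OmegaSG →* Equiv.Perm (Lv n) where
  toFun := levelPerm n
  map_one' := Equiv.ext fun w => Subtype.ext rfl
  map_mul' g h := Equiv.ext fun w => Subtype.ext rfl

/-- `sgn_n`: the sign of the permutation induced on level `n`. -/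
noncomputable def sgn (n : ℕ) (g : OmegaSG) : ℤˣ := Equiv.Perm.sign (levelPerm n g)

/-- An odometer: an element acting transitively on every level of the tree. -/
def IsOdometer (g : OmegaSG) : Prop :=
  ∀ n : ℕ, ∀ v w : Lv n, ∃ k : ℤ, ((g ^ k : OmegaSG) : Equiv.Perm Wd) v.1 = w.1

/-! ### The profinite topology on `Aut(T)` -/

instance : TopologicalSpace Wd := ⊥
instance : DiscreteTopology Wd := ⟨rfl⟩
instance : TopologicalSpace (Equiv.Perm Wd) :=
  TopologicalSpace.induced (fun g => (g : Wd → Wd)) Pi.topologicalSpace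

lemma continuous_permCoe : Continuous (fun g : Equiv.Perm Wd => (g : Wd → Wd)) :=
  continuous_induced_dom

lemma continuous_permApply (w : Wd) : Continuous fun g : Equiv.Perm Wd => g w :=
  (continuous_apply w).comp continuous_permCoe

instance : IsTopologicalGroup (Equiv.Perm Wd) where
  continuous_mul := by
    apply continuous_induced_rng.2
    apply continuous_pi
    intro w
    rw [continuous_discrete_rng]
    intro y
    have h : (fun p : Equiv.Perm Wd × Equiv.Perm Wd => ((p.1 * p.2 : Equiv.Perm Wd) : Wd → Wd) w) ⁻¹' {y}
        = ⋃ x : Wd, {p : Equiv.Perm Wd × Equiv.Perm Wd | p.2 w = x} ∩ {p | p.1 x = y} := by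
      ext p
      simp only [Set.mem_preimage, Set.mem_singleton_iff, Set.mem_iUnion, Set.mem_inter_iff,
        Set.mem_setOf_eq, Equiv.Perm.mul_apply]
      constructor
      · intro hh; exact ⟨p.2 w, rfl, hh⟩
      · rintro ⟨x, rfl, hh⟩; exact hh
    show IsOpen ((fun p : Equiv.Perm Wd × Equiv.Perm Wd =>
      ((p.1 * p.2 : Equiv.Perm Wd) : Wd → Wd) w) ⁻¹' {y})
    rw [h]
    refine isOpen_iUnion fun x => IsOpen.inter ?_ ?_
    · exact IsOpen.preimage ((continuous_permApply w).comp continuous_snd) (isOpen_discrete {x})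
    · exact IsOpen.preimage ((continuous_permApply x).comp continuous_fst) (isOpen_discrete {y})
  continuous_inv := by
    apply continuous_induced_rng.2
    apply continuous_pi
    intro w
    rw [continuous_discrete_rng]
    intro y
    have h : (fun g : Equiv.Perm Wd => ((g⁻¹ : Equiv.Perm Wd) : Wd → Wd) w) ⁻¹' {y}
        = {g : Equiv.Perm Wd | g y = w} := by
      ext g
      simp only [Set.mem_preimage, Set.mem_singleton_iff, Set.mem_setOf_eq]
      constructor
      · rintro rfl; simp
      · intro hh; rw [← hh]; simp
    show IsOpen ((fun g : Equiv.Perm Wd => ((g⁻¹ : Equiv.Perm Wd) : Wd → Wd) w) ⁻¹' {y})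
    rw [h]
    exact IsOpen.preimage (continuous_permApply y) (isOpen_discrete {w})

/-! ### The recursive generators `a₁ = σ`, `a₂ = (a₃⁻¹, a₂⁻¹)σ`, `a₃ = (a₂, a₃)` -/

mutual
  /-- The underlying function of `a₂`. -/
  def pA : Wd → Wd
    | [] => []
    | false :: w => true :: piA w
    | true :: w => false :: qiA w
  /-- The underlying function of `a₃`. -/
  def qA : Wd → Wd
    | [] => []
    | false :: w => false :: pA w
    | true :: w => true :: qA w
  /-- The underlying function of `a₂⁻¹`. -/
  def piA : Wd → Wd
    | [] => []
    | false :: w => true :: qA w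
    | true :: w => false :: pA w
  /-- The underlying function of `a₃⁻¹`. -/
  def qiA : Wd → Wd
    | [] => []
    | false :: w => false :: piA w
    | true :: w => true :: qiA w
end

lemma a_inv_lemma : ∀ w : Wd, pA (piA w) = w ∧ piA (pA w) = w ∧ qA (qiA w) = w ∧ qiA (qA w) = w := by
  intro w
  induction w with
  | nil => simp [pA, qA, piA, qiA]
  | cons b w ih =>
    cases b <;>
      simp [pA, qA, piA, qiA, ih.1, ih.2.1, ih.2.2.1, ih.2.2.2]

/-- The generator `a₂`. -/
def a2 : Equiv.Perm Wd where
  toFun := pA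
  invFun := piA
  left_inv w := (a_inv_lemma w).2.1
  right_inv w := (a_inv_lemma w).1

/-- The generator `a₃`. -/
def a3 : Equiv.Perm Wd where
  toFun := qA
  invFun := qiA
  left_inv w := (a_inv_lemma w).2.2.2
  right_inv w := (a_inv_lemma w).2.2.1

lemma a_length_lemma : ∀ w : Wd, (pA w).length = w.length ∧ (qA w).length = w.length ∧
    (piA w).length = w.length ∧ (qiA w).length = w.length := by
  intro w
  induction w with
  | nil => simp [pA, qA, piA, qiA]
  | cons b w ih =>
    cases b <;>
      simp [pA, qA, piA, qiA, ih.1, ih.2.1, ih.2.2.1, ih.2.2.2]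

lemma a_ne_nil {f : Wd → Wd} (hf : ∀ w : Wd, (f w).length = w.length) {w : Wd} (hw : w ≠ []) :
    f w ≠ [] := by
  intro h
  exact hw (List.eq_nil_of_length_eq_zero (by rw [← hf w, h]; rfl))

lemma a_dropLast_lemma : ∀ w : Wd, (pA w).dropLast = pA w.dropLast ∧
    (qA w).dropLast = qA w.dropLast ∧ (piA w).dropLast = piA w.dropLast ∧
    (qiA w).dropLast = qiA w.dropLast := by
  intro w
  induction w with
  | nil => simp [pA, qA, piA, qiA]
  | cons b w ih =>
    rcases eq_or_ne w [] with rfl | hw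
    · cases b <;> simp [pA, qA, piA, qiA]
    · have hp := a_ne_nil (fun w => (a_length_lemma w).1) hw
      have hq := a_ne_nil (fun w => (a_length_lemma w).2.1) hw
      have hpi := a_ne_nil (fun w => (a_length_lemma w).2.2.1) hw
      have hqi := a_ne_nil (fun w => (a_length_lemma w).2.2.2) hw
      cases b <;>
        simp [pA, qA, piA, qiA, List.dropLast_cons_of_ne_nil hw,
          List.dropLast_cons_of_ne_nil hp, List.dropLast_cons_of_ne_nil hq,
          List.dropLast_cons_of_ne_nil hpi, List.dropLast_cons_of_ne_nil hqi,
          ih.1, ih.2.1, ih.2.2.1, ih.2.2.2]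

lemma a2_mem : a2 ∈ OmegaSG :=
  ⟨fun w => (a_length_lemma w).1, fun w => (a_dropLast_lemma w).1⟩

lemma a3_mem : a3 ∈ OmegaSG :=
  ⟨fun w => (a_length_lemma w).2.1, fun w => (a_dropLast_lemma w).2.1⟩

/-- `a₁ = σ` as an element of `Ω`. -/
def A1 : OmegaSG := swapOm
/-- `a₂` as an element of `Ω`. -/
def A2 : OmegaSG := ⟨a2, a2_mem⟩
/-- `a₃` as an element of `Ω`. -/
def A3 : OmegaSG := ⟨a3, a3_mem⟩

/-- `G = ⟨⟨a₁, a₃⟩⟩`, the topological closure of the subgroup generated by `a₁` and `a₃`: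
a model of the geometric iterated monodromy group of `f(x) = 2/(x-1)²`. -/
noncomputable def Ggrp : Subgroup OmegaSG :=
  (Subgroup.closure {A1, A3}).topologicalClosure

/-- The normal closure in `G` of the closed subgroup generated by an element `c`:
the closed subgroup generated by all `G`-conjugates of `c`. -/
noncomputable def nclG (c : OmegaSG) : Subgroup OmegaSG :=
  (Subgroup.closure {x | ∃ g ∈ Ggrp, x = g * c * g⁻¹}).topologicalClosure

/-- `U`, the normal closure in `G` of `⟨⟨a₂a₃⁻¹⟩⟩`. -/
noncomputable def Ugrp : Subgroup OmegaSG := nclG (A2 * A3⁻¹)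

/-- `H₁`, the normal closure in `G` of `⟨⟨a₁⟩⟩`. -/
noncomputable def H1grp : Subgroup OmegaSG := nclG A1

/-- `H₃`, the normal closure in `G` of `⟨⟨a₃⟩⟩`. -/
noncomputable def H3grp : Subgroup OmegaSG := nclG A3
/-! An automorphism of `T` either fixes both vertices of the first level, and is then the pair
`(a, b)` of its sections at them, or swaps them, and is then `(a, b)σ`. Conjugation by `(a, b)`
acts coordinatewise on pairs, while `σ (u, v) σ⁻¹ = (v, u)`; so `(u, v)` and `(u', v')` are
conjugate exactly when they are conjugate coordinatewise, possibly after swapping. -/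

theorem Prod.isConj_iff {G H : Type*} [Group G] [Group H] {p q : G × H} :
    IsConj p q ↔ IsConj p.1 q.1 ∧ IsConj p.2 q.2 := by
  simp only [_root_.isConj_iff, Prod.ext_iff, Prod.fst_mul, Prod.snd_mul, Prod.fst_inv,
    Prod.snd_inv]
  exact ⟨fun ⟨c, h₁, h₂⟩ => ⟨⟨c.1, h₁⟩, ⟨c.2, h₂⟩⟩, fun ⟨⟨a, h₁⟩, ⟨b, h₂⟩⟩ => ⟨(a, b), h₁, h₂⟩⟩

theorem isConj_of_conj_map_eq {G H : Type*} [Group G] [Group H] {f : G →* H}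
    (hf : Function.Injective f) {s p q : G} (h : f s * f p * (f s)⁻¹ = f q) : IsConj p q :=
  isConj_iff.2 ⟨s, hf (by rwa [map_mul, map_mul, map_inv])⟩

theorem List.iterate_dropLast {α : Type*} (m : ℕ) (l : List α) :
    List.dropLast^[m] l = l.take (l.length - m) := by
  induction m with
  | zero => simp
  | succ m ih =>
    rw [Function.iterate_succ_apply', ih, List.dropLast_eq_take, List.length_take, List.take_take]
    congr 1
    omega

namespace OmegaSG

variable {g : Equiv.Perm Wd}

theorem iterate_dropLast_apply (hg : g ∈ OmegaSG) (m : ℕ) (w : Wd) :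
    List.dropLast^[m] (g w) = g (List.dropLast^[m] w) := by
  induction m generalizing w with
  | zero => rfl
  | succ m ih => rw [Function.iterate_succ_apply', Function.iterate_succ_apply', ih, hg.2]

theorem take_apply (hg : g ∈ OmegaSG) (k : ℕ) (w : Wd) : (g w).take k = g (w.take k) := by
  rcases le_total w.length k with h | h
  · rw [List.take_of_length_le h, List.take_of_length_le (by rwa [hg.1])]
  · simpa [List.iterate_dropLast, hg.1, Nat.sub_sub_self h] using
      iterate_dropLast_apply hg (w.length - k) w

theorem apply_cons_eq_cons_tail (hg : g ∈ OmegaSG) {b c : Bool} (hbc : g [b] = [c]) (w : Wd) :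
    g (b :: w) = c :: (g (b :: w)).tail := by
  have htake := take_apply hg 1 (b :: w)
  rw [List.take_succ_cons, List.take_zero, hbc] at htake
  cases hgw : g (b :: w) with
  | nil => exact absurd hgw (mem_omega_ne_nil hg (List.cons_ne_nil b w))
  | cons x t => simp_all

theorem apply_singleton_eq_or (hg : g ∈ OmegaSG) :
    (g [false] = [false] ∧ g [true] = [true]) ∨ (g [false] = [true] ∧ g [true] = [false]) := by
  obtain ⟨c, hc⟩ := List.length_eq_one_iff.mp (hg.1 [false])
  obtain ⟨d, hd⟩ := List.length_eq_one_iff.mp (hg.1 [true])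
  have hcd : c ≠ d := by
    rintro rfl
    simpa using g.injective (hc.trans hd.symm)
  rw [hc, hd]
  cases c <;> cases d <;> simp_all

def sectionFun (g : Equiv.Perm Wd) (c : Bool) (w : Wd) : Wd := (g (c :: w)).tail

variable {c : Bool}

theorem sectionFun_leftInverse (hg : g ∈ OmegaSG) (hc : g [c] = [c]) :
    Function.LeftInverse (sectionFun g⁻¹ c) (sectionFun g c) := by
  intro w
  rw [sectionFun, sectionFun, ← apply_cons_eq_cons_tail hg hc]
  simp

theorem length_sectionFun (hg : g ∈ OmegaSG) (w : Wd) : (sectionFun g c w).length = w.length := by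
  simp [sectionFun, hg.1]

theorem dropLast_sectionFun (hg : g ∈ OmegaSG) (hc : g [c] = [c]) (w : Wd) :
    (sectionFun g c w).dropLast = sectionFun g c w.dropLast := by
  rcases eq_or_ne w [] with rfl | hw
  · simp [sectionFun, hc]
  · rw [sectionFun, sectionFun, ← List.tail_dropLast, hg.2, List.dropLast_cons_of_ne_nil hw]

theorem exists_apply_cons_eq (hg : g ∈ OmegaSG) (hc : g [c] = [c]) :
    ∃ a : OmegaSG, ∀ w, g (c :: w) = c :: (a : Equiv.Perm Wd) w := by
  have hc' : g⁻¹ [c] = [c] := by rw [Equiv.Perm.inv_eq_iff_eq, hc]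
  refine ⟨⟨⟨sectionFun g c, sectionFun g⁻¹ c, sectionFun_leftInverse hg hc, ?_⟩,
    length_sectionFun hg, dropLast_sectionFun hg hc⟩, apply_cons_eq_cons_tail hg hc⟩
  simpa only [inv_inv, Function.RightInverse] using sectionFun_leftInverse (inv_mem hg) hc'

end OmegaSG

def pairHom : OmegaSG × OmegaSG →* OmegaSG :=
  MonoidHom.mk' (fun p => pairOm p.1 p.2) fun _ _ =>
    Subtype.ext <| Equiv.ext <| by rintro (_ | ⟨(_ | _), w⟩) <;> rfl

theorem pairHom_injective : Function.Injective pairHom := by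
  rintro ⟨a, b⟩ ⟨c, d⟩ h
  have hw : ∀ w, pairFun a b w = pairFun c d w := fun w => congrArg (fun g : OmegaSG => g.1 w) h
  refine Prod.ext (Subtype.ext <| Equiv.ext fun w => ?_) (Subtype.ext <| Equiv.ext fun w => ?_)
  · simpa using hw (false :: w)
  · simpa using hw (true :: w)

theorem swapOm_mul_self : swapOm * swapOm = 1 :=
  Subtype.ext <| Equiv.ext <| by rintro (_ | ⟨b, w⟩) <;> simp [swapOm, Equiv.Perm.mul_apply]

theorem swapOm_mul_pairOm (u v : OmegaSG) : swapOm * pairOm u v = pairOm v u * swapOm :=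
  Subtype.ext <| Equiv.ext <| by rintro (_ | ⟨(_ | _), w⟩) <;> rfl

theorem isConj_pairOm_swap (u v : OmegaSG) : IsConj (pairOm u v) (pairOm v u) :=
  isConj_iff.2 ⟨swapOm, by rw [swapOm_mul_pairOm, mul_inv_cancel_right]⟩

theorem isConj_pairOm_of_isConj {u v u' v' : OmegaSG} (hu : IsConj u u') (hv : IsConj v v') :
    IsConj (pairOm u v) (pairOm u' v') :=
  pairHom.map_isConj (Prod.isConj_iff.2 ⟨hu, hv⟩ : IsConj (u, v) (u', v'))

theorem isConj_of_conj_pairOm_eq {u v u' v' : OmegaSG} {s : OmegaSG × OmegaSG}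
    (h : pairHom s * pairOm u v * (pairHom s)⁻¹ = pairOm u' v') : IsConj u u' ∧ IsConj v v' :=
  Prod.isConj_iff.1 (isConj_of_conj_map_eq (p := (u, v)) (q := (u', v')) pairHom_injective h)

theorem exists_eq_pairHom (g : OmegaSG) (hf : g.1 [false] = [false]) (ht : g.1 [true] = [true]) :
    ∃ s, g = pairHom s := by
  obtain ⟨a, ha⟩ := OmegaSG.exists_apply_cons_eq g.2 hf
  obtain ⟨b, hb⟩ := OmegaSG.exists_apply_cons_eq g.2 ht
  refine ⟨(a, b), Subtype.ext <| Equiv.ext ?_⟩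
  rintro (_ | ⟨(_ | _), w⟩)
  exacts [mem_omega_nil g.2, ha w, hb w]

theorem exists_eq_pairHom_or_eq_pairHom_mul_swapOm (g : OmegaSG) :
    (∃ s, g = pairHom s) ∨ ∃ s, g = pairHom s * swapOm := by
  rcases OmegaSG.apply_singleton_eq_or g.2 with ⟨hf, ht⟩ | ⟨hf, ht⟩
  · exact .inl (exists_eq_pairHom g hf ht)
  · obtain ⟨s, hs⟩ := exists_eq_pairHom (g * swapOm) ht hf
    exact .inr ⟨s, by rw [← hs, mul_assoc, swapOm_mul_self, mul_one]⟩

/-- In `Ω = Aut(T)`, `(u,v)` and `(u',v')` are conjugate iff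
(`u ~ u'` and `v ~ v'`) or (`u ~ v'` and `v ~ u'`). -/
theorem stmt2 (u v u' v' : OmegaSG) :
    IsConj (pairOm u v) (pairOm u' v') ↔
      (IsConj u u' ∧ IsConj v v') ∨ (IsConj u v' ∧ IsConj v u') := by
  constructor
  · rw [isConj_iff]
    rintro ⟨t, ht⟩
    rcases exists_eq_pairHom_or_eq_pairHom_mul_swapOm t with ⟨s, rfl⟩ | ⟨s, rfl⟩
    · exact .inl (isConj_of_conj_pairOm_eq ht)
    · have hs : pairHom s * pairOm v u * (pairHom s)⁻¹ = pairOm u' v' := by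
        rw [← ht, mul_inv_rev, mul_assoc (pairHom s) swapOm, swapOm_mul_pairOm]
        group
      obtain ⟨hvu', huv'⟩ := isConj_of_conj_pairOm_eq hs
      exact .inr ⟨huv', hvu'⟩
  · rintro (⟨huu', hvv'⟩ | ⟨huv', hvu'⟩)
    · exact isConj_pairOm_of_isConj huu' hvv'
    · exact (isConj_pairOm_swap u v).trans (isConj_pairOm_of_isConj hvu' huv')
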